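/- arXiv:2509.23974 — 3 statements merged into one kernel-verified Lean document; each statement's English description precedes it below -/
import Mathlib

section
/- Fix integers m ≥ 1, s with 1 ≤ s ≤ m−1, and ℓ with −m+1 ≤ ℓ ≤ m−1. On the index set L = {max(−ℓ,0), …, min(m−1, m−1−ℓ)}, the map σ(l) = m−1−ℓ−l is an involution of L, and the function f_l(a) = (2a / ∏_{n≠l, 0≤n≤m−1} sin(π(n−l)/a)) · (sin(πs(2l+ℓ−m+1)/a) / ∏_{n≠l+ℓ, 0≤n≤m−1} sin(π(n−l−ℓ)/a)) satisfies f_{σ(l)}(a) = −f_l(a) for all l ∈ L (whenever all the sines in the denominators are nonzero). -/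
/-!
The reflection `n ↦ m - 1 - n` of `{0, …, m - 1}` exchanges the excluded indices `l` and
`σ(l) + ℓ = m - 1 - l`, and `l + ℓ` and `σ(l)`. As the sine is odd, each denominator product of
`f_{σ(l)}` is `(-1)^(m-1)` times one of `f_l`, so the two denominators agree, while the numerator
changes sign because `2σ(l) + ℓ - m + 1 = -(2l + ℓ - m + 1)`.
-/

open Finset Real

section prodDiffs

variable {R : Type*} [CommRing R] (g : ℝ → R) (N : ℤ)

noncomputable def prodDiffs (c : ℤ) : R := ∏ n ∈ (Icc 0 N).filter (· ≠ c), g ((n : ℝ) - c)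

variable {g N}

theorem prodDiffs_reflect (hg : Function.Odd g) {c c' : ℤ} (h : c + c' = N) :
    prodDiffs g N c' = (-1) ^ #((Icc 0 N).filter (· ≠ c)) * prodDiffs g N c := by
  rw [prodDiffs, prodDiffs, ← prod_const, ← prod_mul_distrib]
  refine prod_nbij' (N - ·) (N - ·) ?_ ?_ (fun n _ => sub_sub_cancel N n)
    (fun n _ => sub_sub_cancel N n) fun n _ => ?_
  · simp only [mem_filter, mem_Icc]
    omega
  · simp only [mem_filter, mem_Icc]
    omega
  · rw [neg_one_mul, ← hg, ← h]
    push_cast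
    ring_nf

theorem prodDiffs_reflect_mul (hg : Function.Odd g) {c d : ℤ}
    (hc : c ∈ Icc 0 N) (hd : d ∈ Icc 0 N) :
    prodDiffs g N (N - c) * prodDiffs g N (N - d) = prodDiffs g N c * prodDiffs g N d := by
  rw [prodDiffs_reflect hg (c := c) (c' := N - c) (by ring),
    prodDiffs_reflect hg (c := d) (c' := N - d) (by ring), filter_ne', filter_ne',
    card_erase_of_mem hc, card_erase_of_mem hd, mul_mul_mul_comm, ← pow_add,
    Even.neg_one_pow ⟨_, rfl⟩, one_mul]

end prodDiffs

theorem stmt2_general (m s ℓ : ℤ) (a : ℝ)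
    (f : ℤ → ℝ)
    (hf : ∀ l : ℤ, f l =
      (2 * a / ∏ n ∈ (Finset.Icc 0 (m - 1)).filter (fun n => n ≠ l),
          Real.sin (Real.pi * ((n : ℝ) - (l : ℝ)) / a)) *
      (Real.sin (Real.pi * (s : ℝ) * ((2 * l + ℓ - m + 1 : ℤ) : ℝ) / a) /
        ∏ n ∈ (Finset.Icc 0 (m - 1)).filter (fun n => n ≠ l + ℓ),
          Real.sin (Real.pi * ((n : ℝ) - (l : ℝ) - (ℓ : ℝ)) / a))) :
    (∀ l ∈ Finset.Icc (max (-ℓ) 0) (min (m - 1) (m - 1 - ℓ)),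
        m - 1 - ℓ - l ∈ Finset.Icc (max (-ℓ) 0) (min (m - 1) (m - 1 - ℓ)) ∧
        m - 1 - ℓ - (m - 1 - ℓ - l) = l) ∧
    (∀ l ∈ Finset.Icc (max (-ℓ) 0) (min (m - 1) (m - 1 - ℓ)),
        f (m - 1 - ℓ - l) = - f l) := by
  have mem_L (l : ℤ) : l ∈ Icc (max (-ℓ) 0) (min (m - 1) (m - 1 - ℓ)) ↔
      l ∈ Icc 0 (m - 1) ∧ l + ℓ ∈ Icc 0 (m - 1) := by
    simp only [mem_Icc, max_le_iff, le_min_iff]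
    omega
  refine ⟨fun l hl => ⟨?_, by ring⟩, fun l hl => ?_⟩
  · simp only [mem_L, mem_Icc] at hl ⊢
    omega
  obtain ⟨hl, hlℓ⟩ := (mem_L l).1 hl
  set g : ℝ → ℝ := fun x => sin (π * x / a)
  have hg : Function.Odd g := fun x => by simp only [g, mul_neg, neg_div, sin_neg]
  have hf' (l : ℤ) : f l = 2 * a * sin (π * s * ((2 * l + ℓ - m + 1 : ℤ) : ℝ) / a) /
      (prodDiffs g (m - 1) l * prodDiffs g (m - 1) (l + ℓ)) := by
    simp only [hf, prodDiffs, g, Int.cast_add, sub_add_eq_sub_sub, div_mul_div_comm]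
  have hsin : sin (π * s * ((2 * (m - 1 - ℓ - l) + ℓ - m + 1 : ℤ) : ℝ) / a) =
      -sin (π * s * ((2 * l + ℓ - m + 1 : ℤ) : ℝ) / a) := by
    rw [← sin_neg]
    congr 1
    push_cast
    ring
  rw [hf', hf', hsin, show m - 1 - ℓ - l + ℓ = m - 1 - l by ring, sub_sub (m - 1) ℓ l,
    add_comm ℓ l, prodDiffs_reflect_mul hg hlℓ hl, mul_comm (prodDiffs g _ _), mul_neg, neg_div]

/-- Fix integers `m ≥ 1`, `1 ≤ s ≤ m−1`, `−m+1 ≤ ℓ ≤ m−1`, and `a > m−1`. On the index set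
`L = {max(−ℓ,0), …, min(m−1, m−1−ℓ)}`, the map `σ(l) = m−1−ℓ−l` is an involution of `L`, and
`f_l(a) = (2a / ∏_{n≠l} sin(π(n−l)/a)) · (sin(πs(2l+ℓ−m+1)/a) / ∏_{n≠l+ℓ} sin(π(n−l−ℓ)/a))`
(products over `n ∈ {0,…,m−1}` with the indicated exclusion) satisfies `f_{σ(l)} = −f_l`
for all `l ∈ L`. -/
theorem stmt2 (m s ℓ : ℤ) (hm : 1 ≤ m) (hs1 : 1 ≤ s) (hs2 : s ≤ m - 1)
    (hl1 : -m + 1 ≤ ℓ) (hl2 : ℓ ≤ m - 1) (a : ℝ) (ha : (m : ℝ) - 1 < a)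
    (f : ℤ → ℝ)
    (hf : ∀ l : ℤ, f l =
      (2 * a / ∏ n ∈ (Finset.Icc 0 (m - 1)).filter (fun n => n ≠ l),
          Real.sin (Real.pi * ((n : ℝ) - (l : ℝ)) / a)) *
      (Real.sin (Real.pi * (s : ℝ) * ((2 * l + ℓ - m + 1 : ℤ) : ℝ) / a) /
        ∏ n ∈ (Finset.Icc 0 (m - 1)).filter (fun n => n ≠ l + ℓ),
          Real.sin (Real.pi * ((n : ℝ) - (l : ℝ) - (ℓ : ℝ)) / a))) :
    (∀ l ∈ Finset.Icc (max (-ℓ) 0) (min (m - 1) (m - 1 - ℓ)),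
        m - 1 - ℓ - l ∈ Finset.Icc (max (-ℓ) 0) (min (m - 1) (m - 1 - ℓ)) ∧
        m - 1 - ℓ - (m - 1 - ℓ - l) = l) ∧
    (∀ l ∈ Finset.Icc (max (-ℓ) 0) (min (m - 1) (m - 1 - ℓ)),
        f (m - 1 - ℓ - l) = - f l) :=
  stmt2_general m s ℓ a f hf
end

section
/- Fix integers m ≥ 1, s with 1 ≤ s ≤ m−1, and ℓ with −m+1 ≤ ℓ ≤ m−1, and let a > m−1. Then Σ_{l ∈ L} f_l(a) = 0, where L = {max(−ℓ,0), …, min(m−1, m−1−ℓ)} and f_l(a) = (2a / ∏_{n≠l} sin(π(n−l)/a)) · (sin(πs(2l+ℓ−m+1)/a) / ∏_{n≠l+ℓ} sin(π(n−l−ℓ)/a)), with products over n ∈ {0,…,m−1}. -/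
open Finset Real

lemma prodP_refl (m c d : ℤ) (a : ℝ) (hm : 1 ≤ m) (hcd : c + d = m - 1)
    (hd : d ∈ Finset.Icc 0 (m - 1)) :
    ∏ n ∈ (Finset.Icc 0 (m - 1)).filter (fun n => n ≠ c),
      Real.sin (Real.pi * ((n : ℝ) - (c : ℝ)) / a)
    = (-1 : ℝ) ^ (m - 1).toNat *
      ∏ n ∈ (Finset.Icc 0 (m - 1)).filter (fun n => n ≠ d),
        Real.sin (Real.pi * ((n : ℝ) - (d : ℝ)) / a) := by
  have hcd' : (c : ℝ) + (d : ℝ) = (m : ℝ) - 1 := by exact_mod_cast hcd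
  have h1 : ∏ n ∈ (Finset.Icc 0 (m - 1)).filter (fun n => n ≠ c),
      Real.sin (Real.pi * ((n : ℝ) - (c : ℝ)) / a)
      = ∏ n ∈ (Finset.Icc 0 (m - 1)).filter (fun n => n ≠ d),
        ((-1 : ℝ) * Real.sin (Real.pi * ((n : ℝ) - (d : ℝ)) / a)) := by
    refine Finset.prod_nbij' (fun n => m - 1 - n) (fun n => m - 1 - n) ?_ ?_ ?_ ?_ ?_
    · intro x hx
      simp only [Finset.mem_filter, Finset.mem_Icc] at hx ⊢
      omega
    · intro x hx
      simp only [Finset.mem_filter, Finset.mem_Icc] at hx ⊢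
      omega
    · intro x _; omega
    · intro x _; omega
    · intro x _
      have hB : Real.pi * (((m - 1 - x : ℤ) : ℝ) - (d : ℝ)) / a
          = -(Real.pi * ((x : ℝ) - (c : ℝ)) / a) := by
        rw [← neg_div]
        congr 1
        push_cast
        linear_combination (-Real.pi) * hcd'
      rw [hB, Real.sin_neg]
      ring
  rw [h1, Finset.prod_mul_distrib, Finset.prod_const]
  congr 1
  have hfe : (Finset.Icc 0 (m - 1)).filter (fun n => n ≠ d)
      = (Finset.Icc 0 (m - 1)).erase d := by
    ext x; simp [Finset.mem_erase, and_comm]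
  rw [hfe, Finset.card_erase_of_mem hd, Int.card_Icc]
  congr 1
  omega

/-- Fix integers `m ≥ 1`, `1 ≤ s ≤ m−1`, `−m+1 ≤ ℓ ≤ m−1`, and let `a > m−1`.
Then `Σ_{l ∈ L} f_l(a) = 0`, where `L = {max(−ℓ,0), …, min(m−1, m−1−ℓ)}` and
`f_l(a) = (2a / ∏_{n≠l} sin(π(n−l)/a)) · (sin(πs(2l+ℓ−m+1)/a) / ∏_{n≠l+ℓ} sin(π(n−l−ℓ)/a))`,
with products over `n ∈ {0,…,m−1}`. -/
theorem stmt3 (m s ℓ : ℤ) (hm : 1 ≤ m) (hs1 : 1 ≤ s) (hs2 : s ≤ m - 1)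
    (hl1 : -m + 1 ≤ ℓ) (hl2 : ℓ ≤ m - 1) (a : ℝ) (ha : (m : ℝ) - 1 < a) :
    ∑ l ∈ Finset.Icc (max (-ℓ) 0) (min (m - 1) (m - 1 - ℓ)),
      ((2 * a / ∏ n ∈ (Finset.Icc 0 (m - 1)).filter (fun n => n ≠ l),
          Real.sin (Real.pi * ((n : ℝ) - (l : ℝ)) / a)) *
        (Real.sin (Real.pi * (s : ℝ) * ((2 * l + ℓ - m + 1 : ℤ) : ℝ) / a) /
          ∏ n ∈ (Finset.Icc 0 (m - 1)).filter (fun n => n ≠ l + ℓ),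
            Real.sin (Real.pi * ((n : ℝ) - (l : ℝ) - (ℓ : ℝ)) / a))) = 0 := by
  set P : ℤ → ℝ := fun c => ∏ n ∈ (Finset.Icc 0 (m - 1)).filter (fun n => n ≠ c),
      Real.sin (Real.pi * ((n : ℝ) - (c : ℝ)) / a) with hP
  have hsummand : ∀ l : ℤ,
      ((2 * a / ∏ n ∈ (Finset.Icc 0 (m - 1)).filter (fun n => n ≠ l),
          Real.sin (Real.pi * ((n : ℝ) - (l : ℝ)) / a)) *
        (Real.sin (Real.pi * (s : ℝ) * ((2 * l + ℓ - m + 1 : ℤ) : ℝ) / a) /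
          ∏ n ∈ (Finset.Icc 0 (m - 1)).filter (fun n => n ≠ l + ℓ),
            Real.sin (Real.pi * ((n : ℝ) - (l : ℝ) - (ℓ : ℝ)) / a)))
      = (2 * a / P l) *
        (Real.sin (Real.pi * (s : ℝ) * ((2 * l + ℓ - m + 1 : ℤ) : ℝ) / a) / P (l + ℓ)) := by
    intro l
    congr 1
    congr 1
    apply Finset.prod_congr rfl
    intro n _
    congr 1
    push_cast
    ring
  apply Finset.sum_involution (fun l _ => m - 1 - ℓ - l)
  · intro l hl
    simp only [Finset.mem_Icc, le_min_iff, max_le_iff] at hl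
    rw [hsummand l, hsummand (m - 1 - ℓ - l)]
    have hP1 : P (m - 1 - ℓ - l) = (-1 : ℝ) ^ (m - 1).toNat * P (l + ℓ) := by
      rw [hP]
      exact prodP_refl m _ _ a hm (by ring) (by simp only [Finset.mem_Icc]; omega)
    have hP2 : P (m - 1 - ℓ - l + ℓ) = (-1 : ℝ) ^ (m - 1).toNat * P l := by
      rw [hP]
      exact prodP_refl m _ _ a hm (by ring) (by simp only [Finset.mem_Icc]; omega)
    have hsin : Real.sin (Real.pi * (s : ℝ) *
        ((2 * (m - 1 - ℓ - l) + ℓ - m + 1 : ℤ) : ℝ) / a)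
        = -Real.sin (Real.pi * (s : ℝ) * ((2 * l + ℓ - m + 1 : ℤ) : ℝ) / a) := by
      rw [← Real.sin_neg]
      congr 1
      push_cast
      ring
    rw [hP1, hP2, hsin]
    set t : ℝ := (-1 : ℝ) ^ (m - 1).toNat with ht'
    have ht : t * t = 1 := by
      rw [ht', ← pow_add, ← two_mul, pow_mul, neg_one_sq, one_pow]
    set S := Real.sin (Real.pi * (s : ℝ) * ((2 * l + ℓ - m + 1 : ℤ) : ℝ) / a)
    rw [div_mul_div_comm, div_mul_div_comm]
    have hden : (t * P (l + ℓ)) * (t * P l) = P l * P (l + ℓ) := by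
      linear_combination (P (l + ℓ) * P l) * ht
    rw [hden, mul_neg, neg_div]
    ring
  · intro l hl hne
    simp only [Finset.mem_Icc] at hl
    intro hcontra
    apply hne
    have h0 : (2 * l + ℓ - m + 1 : ℤ) = 0 := by omega
    rw [h0]
    simp
  · intro l hl
    simp only [Finset.mem_Icc, le_min_iff, max_le_iff] at hl ⊢
    omega
  · intro l _
    show m - 1 - ℓ - (m - 1 - ℓ - l) = l
    omega
end

section
/- Let m ≥ 1 and a > 0 with sin(πn/a) ≠ 0 for n = 1,…,m−1, and let x₁, x₂ ∈ ℂ with x₁ ≠ x₂ mod i·ℤ + a·ℤ (so all denominators are nonzero). Define, for l = 0,…,m−1, φ_{2,l}(x) = (2a(−i)^m / ∏_{n≠l, 0≤n≤m−1} 2 sin(π(n−l)/a)) · 1/∏_{n=0}^{m−1} 2 sinh(π(x₂−x₁+i(n−l))/a). Then φ_{2,l}(x₂,x₁) = −φ_{2,m−1−l}(x₁,x₂); i.e., swapping x₁ and x₂ maps the coefficient of index l to minus the coefficient of index m−1−l. -/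
open Complex Real Finset

/-!
Under the reflection `n ↦ m - 1 - n` of the product index, each factor defining `φ (m - 1 - l)`
at `(x₁, x₂)` becomes minus the corresponding factor of `φ l` at `(x₂, x₁)`, because `sin` and
`sinh` are odd. The sine product has `m - 1` factors and the sinh product `m`, so the total sign
is `(-1) ^ (2m - 1) = -1`.
-/

theorem Nat.cast_sub_reflect {R : Type*} [AddCommGroupWithOne R] {m n l : ℕ} (hn : n < m)
    (hl : l < m) : (n : R) - ((m - 1 - l : ℕ) : R) = -(((m - 1 - n : ℕ) : R) - l) := by
  rw [Nat.cast_sub (by omega : l ≤ m - 1), Nat.cast_sub (by omega : n ≤ m - 1)]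
  abel

namespace Finset

variable {R S : Type*} [AddCommGroupWithOne R] [CommMonoid S] [HasDistribNeg S]
  (g g' : R → S) {m l : ℕ}

theorem prod_range_reflect_of_neg (hg : ∀ t, g (-t) = -g' t) (hl : l < m) :
    ∏ n ∈ range m, g (n - ↑(m - 1 - l)) = (-1) ^ m * ∏ n ∈ range m, g' (n - l) := by
  calc ∏ n ∈ range m, g (n - ↑(m - 1 - l))
      = ∏ n ∈ range m, -g' (↑(m - 1 - n) - l) :=
        prod_congr rfl fun n hn => by rw [Nat.cast_sub_reflect (mem_range.1 hn) hl, hg]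
    _ = (-1) ^ m * ∏ n ∈ range m, g' (↑(m - 1 - n) - l) := by rw [prod_neg, card_range]
    _ = (-1) ^ m * ∏ n ∈ range m, g' (n - l) := by
        rw [prod_range_reflect (fun n => g' ((n : R) - l))]

theorem prod_range_filter_ne_reflect_of_neg (hg : ∀ t, g (-t) = -g' t) (hl : l < m) :
    ∏ n ∈ (range m).filter (· ≠ m - 1 - l), g (n - ↑(m - 1 - l)) =
      (-1) ^ (m - 1) * ∏ n ∈ (range m).filter (· ≠ l), g' (n - l) := by
  calc ∏ n ∈ (range m).filter (· ≠ m - 1 - l), g (n - ↑(m - 1 - l))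
      = ∏ n ∈ (range m).filter (· ≠ l), -g' (n - l) := by
        refine prod_nbij' (m - 1 - ·) (m - 1 - ·) ?_ ?_ ?_ ?_ fun n hn => by
          rw [Nat.cast_sub_reflect (mem_range.1 (mem_filter.1 hn).1) hl, hg]
        all_goals intro n hn; simp only [mem_filter, mem_range] at hn ⊢; omega
    _ = (-1) ^ (m - 1) * ∏ n ∈ (range m).filter (· ≠ l), g' (n - l) := by
        rw [prod_neg, filter_ne', card_erase_of_mem (mem_range.2 hl), card_range]

end Finset

theorem stmt11_general (m : ℕ) (a : ℝ)
    (x₁ x₂ : ℂ)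
    (φ : ℕ → ℂ → ℂ → ℂ)
    (hφ : ∀ (l : ℕ) (u v : ℂ), φ l u v =
      (2 * (a : ℂ) * (-Complex.I) ^ m /
          ∏ n ∈ (Finset.range m).filter (fun n => n ≠ l),
            (2 * (Real.sin (Real.pi * ((n : ℝ) - (l : ℝ)) / a) : ℂ))) *
        (1 / ∏ n ∈ Finset.range m,
            2 * Complex.sinh (Real.pi * (v - u + Complex.I * ((n : ℂ) - (l : ℂ))) / a))) :
    ∀ l < m, φ l x₂ x₁ = - φ (m - 1 - l) x₁ x₂ := by
  intro l hl
  have hsin := prod_range_filter_ne_reflect_of_neg (fun t : ℝ => (2 * (Real.sin (π * t / a) : ℂ)))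
    (fun t : ℝ => (2 * (Real.sin (π * t / a) : ℂ)))
    (fun t => by rw [mul_neg, neg_div, Real.sin_neg]; push_cast; ring) hl
  have hsinh := prod_range_reflect_of_neg (fun t : ℂ => 2 * Complex.sinh (π * (x₂ - x₁ + I * t) / a))
    (fun t : ℂ => 2 * Complex.sinh (π * (x₁ - x₂ + I * t) / a))
    (fun t => by rw [← mul_neg, ← Complex.sinh_neg]; ring_nf) hl
  rw [hφ, hφ, hsin, hsinh]
  have hsign : ((-1 : ℂ) ^ (m - 1))⁻¹ * ((-1) ^ m)⁻¹ = -1 := by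
    rw [← mul_inv, ← pow_add, Odd.neg_one_pow ⟨m - 1, by omega⟩, inv_neg, inv_one]
  set P := ∏ n ∈ (range m).filter (· ≠ l), (2 * (Real.sin (π * ((n : ℝ) - l) / a) : ℂ))
  set Q := ∏ n ∈ range m, 2 * Complex.sinh (π * (x₁ - x₂ + I * ((n : ℂ) - l)) / a)
  simp only [div_eq_mul_inv, mul_inv, one_mul]
  linear_combination (2 * a * (-I) ^ m * P⁻¹ * Q⁻¹) * hsign

/-- Let `m ≥ 1`, `a > 0` with `sin(πn/a) ≠ 0` for `n = 1,…,m−1`, and `x₁ ≠ x₂ mod i(ℤ + aℤ)`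
(so all denominators are nonzero). For `l = 0,…,m−1` let
`φ_{2,l}(x₁,x₂) = (2a(−i)^m / ∏_{n≠l} 2 sin(π(n−l)/a)) · 1/∏_{n=0}^{m−1} 2 sinh(π(x₂−x₁+i(n−l))/a)`.
Then `φ_{2,l}(x₂,x₁) = −φ_{2,m−1−l}(x₁,x₂)`. -/
theorem stmt11 (m : ℕ) (hm : 1 ≤ m) (a : ℝ) (ha : 0 < a)
    (hsin : ∀ n ∈ Finset.Icc 1 (m - 1), Real.sin (Real.pi * n / a) ≠ 0)
    (x₁ x₂ : ℂ) (hx : ∀ p q : ℤ, x₁ - x₂ ≠ Complex.I * ((p : ℂ) + (q : ℂ) * a))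
    (φ : ℕ → ℂ → ℂ → ℂ)
    (hφ : ∀ (l : ℕ) (u v : ℂ), φ l u v =
      (2 * (a : ℂ) * (-Complex.I) ^ m /
          ∏ n ∈ (Finset.range m).filter (fun n => n ≠ l),
            (2 * (Real.sin (Real.pi * ((n : ℝ) - (l : ℝ)) / a) : ℂ))) *
        (1 / ∏ n ∈ Finset.range m,
            2 * Complex.sinh (Real.pi * (v - u + Complex.I * ((n : ℂ) - (l : ℂ))) / a))) :
    ∀ l < m, φ l x₂ x₁ = - φ (m - 1 - l) x₁ x₂ :=
  stmt11_general m a x₁ x₂ φ hφ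
end
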